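/- arXiv:1303.5550 — 6 statements merged into one kernel-verified Lean document; each statement's English description precedes it below -/
import Mathlib

section
/- For every ω ∈ ℂ, the function z ↦ e^{iωz}/sin(z) admits no meromorphic antiderivative on ℂ; that is, there is no F : ℂ → ℂ, meromorphic at every point of ℂ, with complex derivative e^{iωz}/sin(z) at every z ∈ ℂ with sin(z) ≠ 0. -/
open Complex Metric Real

/-!
The residue of `e^{iωz} / sin z` at the simple zero `z = 0` of `sin` is `e^0 / cos 0 = 1`, so the
integral over the circle `|z| = 1` (which encloses no other zero of `sin`) is `2πi`. On the other
hand the integral of a derivative over a closed curve vanishes.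
-/

namespace Complex

theorem sin_ne_zero_of_norm_lt_pi {z : ℂ} (hz : z ≠ 0) (hzπ : ‖z‖ < π) : sin z ≠ 0 := by
  rw [Ne, sin_eq_zero_iff]
  rintro ⟨k, rfl⟩
  have hk : k ≠ 0 := by rintro rfl; simp at hz
  have hk_abs : (1 : ℝ) ≤ |(k : ℝ)| := by exact_mod_cast Int.one_le_abs hk
  rw [norm_mul, norm_real, norm_of_nonneg pi_pos.le, norm_intCast] at hzπ
  nlinarith [pi_pos]

theorem dslope_sin_zero_ne_zero {z : ℂ} (hzπ : ‖z‖ < π) : dslope sin 0 z ≠ 0 := by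
  rcases eq_or_ne z 0 with rfl | hz
  · simp
  · rw [dslope_of_ne _ hz, slope_def_field, sub_zero, sin_zero, sub_zero]
    exact div_ne_zero (sin_ne_zero_of_norm_lt_pi hz hzπ) hz

theorem differentiable_dslope_sin_zero : Differentiable ℂ (dslope sin 0) := by
  rw [← differentiableOn_univ, differentiableOn_dslope Filter.univ_mem]
  exact differentiable_sin.differentiableOn

theorem circleIntegral_div_sin {f : ℂ → ℂ} {R : ℝ} (hf : DifferentiableOn ℂ f (closedBall 0 R))
    (hR : 0 < R) (hRπ : R < π) : (∮ z in C(0, R), f z / sin z) = 2 * π * I * f 0 := by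
  have hg : DifferentiableOn ℂ (fun z => f z / dslope sin 0 z) (closedBall 0 R) :=
    hf.div differentiable_dslope_sin_zero.differentiableOn fun z hz =>
      dslope_sin_zero_ne_zero ((mem_closedBall_zero_iff.1 hz).trans_lt hRπ)
  have hcauchy := hg.circleIntegral_sub_inv_smul (mem_ball_self hR)
  simp only [dslope_same, deriv_sin, cos_zero, div_one, smul_eq_mul] at hcauchy
  rw [← hcauchy]
  refine circleIntegral.integral_congr hR.le fun z hz => ?_
  have hz0 : z ≠ 0 := ne_of_mem_sphere hz hR.ne'
  simp only [dslope_of_ne _ hz0, slope_def_field, sub_zero, sin_zero]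
  field_simp

end Complex

/-- For every `ω ∈ ℂ`, the function `z ↦ e^{iωz}/sin z` admits no meromorphic
antiderivative on `ℂ`. -/
theorem stmt_2 (ω : ℂ) :
    ¬ ∃ F : ℂ → ℂ, (∀ z : ℂ, MeromorphicAt F z) ∧
      ∀ z : ℂ, Complex.sin z ≠ 0 →
        HasDerivAt F (Complex.exp (Complex.I * ω * z) / Complex.sin z) z := by
  rintro ⟨F, -, hF⟩
  have hexp : Differentiable ℂ fun z => exp (I * ω * z) := by fun_prop
  have hresidue := circleIntegral_div_sin hexp.differentiableOn one_pos (by linarith [pi_gt_three])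
  have hsin : ∀ z ∈ sphere (0 : ℂ) 1, sin z ≠ 0 := fun z hz =>
    sin_ne_zero_of_norm_lt_pi (ne_of_mem_sphere hz one_ne_zero)
      ((mem_sphere_zero_iff_norm.1 hz).trans_lt (by linarith [pi_gt_three]))
  rw [circleIntegral.integral_eq_zero_of_hasDerivWithinAt zero_le_one
    fun z hz => (hF z (hsin z hz)).hasDerivWithinAt] at hresidue
  simp [pi_ne_zero] at hresidue
end

section
/- For ω ∈ ℂ, the function z ↦ e^{iωz}/sin²(z) admits a meromorphic antiderivative on ℂ if and only if ω = 0 (in which case F(z) = −cot(z) = −cos(z)/sin(z) is such an antiderivative). -/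
/-!
Adding `e^{iωz} cot z`, whose derivative is `iω e^{iωz} cot z - e^{iωz} / sin² z`, to an
antiderivative of `e^{iωz} / sin² z` gives an antiderivative of `iω e^{iωz} cot z` near `0`, a
function with a simple pole of residue `iω` at `0`. But a function with a primitive on a
punctured disc has zero residue: the primitive makes its integral over a small circle vanish,
while Cauchy's integral formula computes that integral as `2πi` times the residue. Hence `ω = 0`,
and then `-cot` is an antiderivative.
-/

open Complex Filter Metric
open scoped Topology Real

theorem eq_zero_of_hasDerivAt_div_sub {F g : ℂ → ℂ} {c : ℂ} (hg : AnalyticAt ℂ g c)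
    (hF : ∀ᶠ z in 𝓝[≠] c, HasDerivAt F (g z / (z - c)) z) : g c = 0 := by
  obtain ⟨R, hR, hball⟩ := eventually_nhds_iff_ball.mp
    (hg.eventually_analyticAt.and (eventually_nhdsWithin_iff.mp hF))
  have hr : 0 < R / 2 := half_pos hR
  have hsub : closedBall c (R / 2) ⊆ ball c R := closedBall_subset_ball (half_lt_self hR)
  have hcauchy : (∮ z in C(c, R / 2), (z - c)⁻¹ • g z) = (2 * π * I : ℂ) • g c :=
    DifferentiableOn.circleIntegral_sub_inv_smul
      (fun z hz => ((hball z (hsub hz)).1.differentiableAt).differentiableWithinAt)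
      (mem_ball_self hr)
  have hprimitive : (∮ z in C(c, R / 2), (z - c)⁻¹ • g z) = 0 := by
    refine circleIntegral.integral_eq_zero_of_hasDerivWithinAt (f := F) hr.le fun z hz => ?_
    have hzc : z ≠ c := ne_of_mem_sphere hz hr.ne'
    have hderiv := (hball z (hsub (sphere_subset_closedBall hz))).2 hzc
    rw [smul_eq_mul, inv_mul_eq_div]
    exact hderiv.hasDerivWithinAt
  rw [hprimitive, smul_eq_mul] at hcauchy
  simpa [Real.pi_ne_zero, I_ne_zero] using hcauchy.symm

theorem eq_zero_of_hasDerivAt_div {F g h : ℂ → ℂ} {c : ℂ} (hg : AnalyticAt ℂ g c)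
    (hh : AnalyticAt ℂ h c) (hc : h c = 0) (hh' : deriv h c ≠ 0)
    (hF : ∀ᶠ z in 𝓝[≠] c, HasDerivAt F (g z / h z) z) : g c = 0 := by
  set S := dslope h c
  have hS : AnalyticAt ℂ S c := by
    obtain ⟨p, hp⟩ := hh
    exact hp.has_fpower_series_dslope_fslope.analyticAt
  have hSc : S c ≠ 0 := by simpa [S, dslope_same] using hh'
  have hfac (z : ℂ) : h z = (z - c) * S z := by
    simpa [hc] using (sub_smul_dslope h c z).symm
  have hres : g c / S c = 0 := by
    refine eq_zero_of_hasDerivAt_div_sub (F := F) (g := fun z => g z / S z) (hg.div hS hSc) ?_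
    filter_upwards [hF] with z hz
    rwa [hfac, mul_comm, ← div_div] at hz
  simpa [hSc] using hres

theorem hasDerivAt_cexp_mul_cos_div_sin (ω : ℂ) {z : ℂ} (hz : sin z ≠ 0) :
    HasDerivAt (fun w => exp (I * ω * w) * cos w / sin w)
      (I * ω * exp (I * ω * z) * cos z / sin z - exp (I * ω * z) / sin z ^ 2) z := by
  have hexp : HasDerivAt (fun w => exp (I * ω * w)) (exp (I * ω * z) * (I * ω)) z := by
    simpa using ((hasDerivAt_id z).const_mul (I * ω)).cexp
  refine ((hexp.mul (hasDerivAt_cos z)).div (hasDerivAt_sin z) hz).congr_deriv ?_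
  simp only [Pi.mul_apply]
  field_simp
  linear_combination -sin_sq_add_cos_sq z

/-- For `ω ∈ ℂ`, the function `z ↦ e^{iωz}/sin² z` admits a meromorphic
antiderivative on `ℂ` if and only if `ω = 0`. -/
theorem stmt_3 (ω : ℂ) :
    (∃ F : ℂ → ℂ, (∀ z : ℂ, MeromorphicAt F z) ∧
      ∀ z : ℂ, Complex.sin z ≠ 0 →
        HasDerivAt F (Complex.exp (Complex.I * ω * z) / Complex.sin z ^ 2) z) ↔
    ω = 0 := by
  constructor
  · rintro ⟨F, -, hF⟩
    have hsin : ∀ᶠ z in 𝓝[≠] (0 : ℂ), sin z ≠ 0 := by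
      simpa using (hasDerivAt_sin 0).eventually_ne (by simp)
    have hres := eq_zero_of_hasDerivAt_div (g := fun z => I * ω * exp (I * ω * z) * cos z)
      (h := sin) (by fun_prop) (by fun_prop) sin_zero (by simp) <| by
        filter_upwards [hsin] with z hz
        exact ((hF z hz).add (hasDerivAt_cexp_mul_cos_div_sin ω hz)).congr_deriv (by ring)
    simpa [I_ne_zero] using hres
  · rintro rfl
    refine ⟨fun z => -(cos z / sin z), fun z => ?_, fun z hz => ?_⟩
    · exact ((analyticAt_cos.meromorphicAt).div analyticAt_sin.meromorphicAt).neg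
    · simpa [Pi.neg_def] using (hasDerivAt_cexp_mul_cos_div_sin 0 hz).neg
end

section
/- Let n ≥ 1 be an integer and ω ∈ ℂ. The function z ↦ e^{iωz}/sin^n(z) admits a meromorphic antiderivative on ℂ if and only if ω is an integer with ω ≡ n (mod 2) and |ω| ≤ n − 2. Explicitly: for even n ≥ 2 this happens exactly for ω ∈ {0, ±2, ±4, …, ±(n−2)}; for odd n ≥ 3 exactly for ω ∈ {±1, ±3, …, ±(n−2)}; and for n = 1 it never happens. -/
/-!
Write `f_k(z) = e^{iωz} / sin^k z`. For `k ≥ 1` the meromorphic function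
`G_k = cos · f_{k+1} + (iω/k) f_k` satisfies `G_k' = ((k² - ω²)/k) f_k - (k + 1) f_{k+2}`, so
`f_{k+2}` has a meromorphic antiderivative iff `(k² - ω²) f_k` does. Descending in steps of two
reduces everything to `n ∈ {1, 2}`, and each `ω = ±k` terminates the descent with a success.
For `n = 2, ω = 0` we have `1/sin² = (-cot)'`. Otherwise there is an obstruction: for `u` entire,
the integral of `u / sin` over a small circle around `0` is `2πi u(0)`, while an antiderivative
forces it to vanish. This rules out `f_1` directly, and `f_2` with `ω ≠ 0` because
`(cos · f_1)' = iω cos · f_1 - f_2`.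
-/

open Complex Metric

def AdmitsMeromorphicAntideriv (h : ℂ → ℂ) : Prop :=
  ∃ F : ℂ → ℂ, (∀ z, MeromorphicAt F z) ∧ ∀ z, sin z ≠ 0 → HasDerivAt F (h z) z

namespace AdmitsMeromorphicAntideriv

theorem zero : AdmitsMeromorphicAntideriv fun _ => 0 :=
  ⟨fun _ => 0, fun z => MeromorphicAt.const 0 z, fun z _ => hasDerivAt_const z 0⟩

theorem const_mul {h : ℂ → ℂ} (c : ℂ) (hh : AdmitsMeromorphicAntideriv h) :
    AdmitsMeromorphicAntideriv fun z => c * h z := by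
  obtain ⟨F, hFm, hF⟩ := hh
  exact ⟨fun z => c * F z, fun z => (MeromorphicAt.const c z).mul (hFm z),
    fun z hz => (hF z hz).const_mul c⟩

theorem const_mul_iff {h : ℂ → ℂ} {c : ℂ} (hc : c ≠ 0) :
    AdmitsMeromorphicAntideriv (fun z => c * h z) ↔ AdmitsMeromorphicAntideriv h :=
  ⟨fun hch => by simpa only [inv_mul_cancel_left₀ hc] using hch.const_mul c⁻¹, const_mul c⟩

theorem add_deriv_iff {h g G : ℂ → ℂ} (hGm : ∀ z, MeromorphicAt G z)
    (hG : ∀ z, sin z ≠ 0 → HasDerivAt G (g z) z) :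
    AdmitsMeromorphicAntideriv (fun z => h z + g z) ↔ AdmitsMeromorphicAntideriv h := by
  constructor
  · rintro ⟨F, hFm, hF⟩
    exact ⟨F - G, fun z => (hFm z).sub (hGm z),
      fun z hz => ((hF z hz).sub (hG z hz)).congr_deriv (add_sub_cancel_right _ _)⟩
  · rintro ⟨F, hFm, hF⟩
    exact ⟨F + G, fun z => (hFm z).add (hGm z), fun z hz => (hF z hz).add (hG z hz)⟩

end AdmitsMeromorphicAntideriv

open AdmitsMeromorphicAntideriv

theorem Complex.sin_ne_zero_of_norm_lt_pi_s6 {z : ℂ} (h0 : z ≠ 0) (h : ‖z‖ < Real.pi) :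
    sin z ≠ 0 := by
  refine sin_ne_zero_iff.2 fun k hk => ?_
  subst hk
  have hk0 : k ≠ 0 := by rintro rfl; simp at h0
  have : Real.pi ≤ ‖(k : ℂ) * Real.pi‖ := by
    rw [norm_mul, norm_intCast, norm_real, Real.norm_of_nonneg Real.pi_pos.le]
    exact le_mul_of_one_le_left Real.pi_pos.le (by exact_mod_cast Int.one_le_abs hk0)
  linarith

theorem circleIntegral_div_sin {u : ℂ → ℂ} (hu : Differentiable ℂ u) {r : ℝ} (hr0 : 0 < r)
    (hr : r < Real.pi) : (∮ z in C(0, r), u z / sin z) = 2 * Real.pi * I * u 0 := by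
  -- `sin z = z * g z` with `g` entire and zero-free on the disc, so `u / g` is holomorphic there
  set g := dslope sin 0
  have hsin_eq (z : ℂ) : sin z = z * g z := by
    simpa using (sub_smul_dslope sin 0 z).symm
  have hg0 : g 0 = 1 := by simp [g, dslope_same]
  have hg : ∀ z ∈ closedBall (0 : ℂ) r, g z ≠ 0 := by
    intro z hz
    rcases eq_or_ne z 0 with rfl | h0
    · simp [hg0]
    · refine right_ne_zero_of_mul (hsin_eq z ▸ sin_ne_zero_of_norm_lt_pi_s6 h0 ?_)
      exact (mem_closedBall_zero_iff.1 hz).trans_lt hr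
  have hgd : DifferentiableOn ℂ g (closedBall 0 r) :=
    (differentiableOn_dslope (closedBall_mem_nhds 0 hr0)).2 differentiable_sin.differentiableOn
  calc (∮ z in C(0, r), u z / sin z) = ∮ z in C(0, r), (z - 0)⁻¹ • (u / g) z := by
        refine circleIntegral.integral_congr hr0.le fun z _ => ?_
        rw [Pi.div_apply, hsin_eq, sub_zero, smul_eq_mul, div_mul_eq_div_div_swap, inv_mul_eq_div]
    _ = 2 * Real.pi * I * u 0 := by
        rw [(hu.differentiableOn.div hgd hg).circleIntegral_sub_inv_smul (mem_ball_self hr0),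
          Pi.div_apply, hg0, div_one, smul_eq_mul]

theorem not_admitsMeromorphicAntideriv_div_sin {u : ℂ → ℂ} (hu : Differentiable ℂ u)
    (hu0 : u 0 ≠ 0) : ¬ AdmitsMeromorphicAntideriv fun z => u z / sin z := by
  rintro ⟨F, -, hF⟩
  have hr0 : 0 < Real.pi / 2 := by positivity
  have hr : Real.pi / 2 < Real.pi := by linarith [Real.pi_pos]
  have hsin : ∀ z ∈ sphere (0 : ℂ) (Real.pi / 2), sin z ≠ 0 := fun z hz =>
    sin_ne_zero_of_norm_lt_pi_s6 (ne_zero_of_mem_sphere hr0.ne' ⟨z, hz⟩)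
      ((mem_sphere_zero_iff_norm.1 hz).trans_lt hr)
  have hzero := circleIntegral.integral_eq_zero_of_hasDerivWithinAt hr0.le
    fun z hz => (hF z (hsin z hz)).hasDerivWithinAt
  rw [circleIntegral_div_sin hu hr0 hr] at hzero
  simp [Real.pi_ne_zero, hu0] at hzero

noncomputable def expDivSinPow (ω : ℂ) (k : ℕ) (z : ℂ) : ℂ := exp (I * ω * z) / sin z ^ k

section expDivSinPow

variable {ω z : ℂ}

@[fun_prop]
theorem meromorphicAt_expDivSinPow (k : ℕ) : MeromorphicAt (expDivSinPow ω k) z := by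
  unfold expDivSinPow; fun_prop

theorem hasDerivAt_expDivSinPow (k : ℕ) (hz : sin z ≠ 0) :
    HasDerivAt (expDivSinPow ω k)
      (I * ω * expDivSinPow ω k z - k * cos z * expDivSinPow ω (k + 1) z) z := by
  have hexp : HasDerivAt (fun w => exp (I * ω * w)) (exp (I * ω * z) * (I * ω)) z := by
    simpa using ((hasDerivAt_id z).const_mul (I * ω)).cexp
  refine (hexp.div ((hasDerivAt_sin z).fun_pow k) (pow_ne_zero k hz)).congr_deriv ?_
  unfold expDivSinPow
  rcases k with _ | k
  · simp [mul_comm]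
  · simp only [Nat.add_sub_cancel]
    field_simp
    ring

theorem hasDerivAt_cos_mul_expDivSinPow (k : ℕ) (hz : sin z ≠ 0) :
    HasDerivAt (fun w => cos w * expDivSinPow ω (k + 1) w)
      (I * ω * (cos z * expDivSinPow ω (k + 1) z) + k * expDivSinPow ω k z
        - (k + 1) * expDivSinPow ω (k + 2) z) z := by
  refine ((hasDerivAt_cos z).mul (hasDerivAt_expDivSinPow (k + 1) hz)).congr_deriv ?_
  unfold expDivSinPow
  field_simp
  push_cast
  linear_combination (-((k : ℂ) + 1) * sin z ^ (2 * k + 1)) * sin_sq_add_cos_sq z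

theorem admits_expDivSinPow_add_two_iff {k : ℕ} (hk : k ≠ 0) :
    AdmitsMeromorphicAntideriv (expDivSinPow ω (k + 2)) ↔
      AdmitsMeromorphicAntideriv fun z => ((k : ℂ) ^ 2 - ω ^ 2) * expDivSinPow ω k z := by
  have hk' : (k : ℂ) ≠ 0 := Nat.cast_ne_zero.2 hk
  set G := fun w => cos w * expDivSinPow ω (k + 1) w + I * ω / k * expDivSinPow ω k w
  have hGm : ∀ z, MeromorphicAt G z := fun z => by fun_prop
  have hG : ∀ z, sin z ≠ 0 → HasDerivAt G (((k : ℂ) ^ 2 - ω ^ 2) / k * expDivSinPow ω k z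
      - (k + 1) * expDivSinPow ω (k + 2) z) z := fun z hz => by
    refine ((hasDerivAt_cos_mul_expDivSinPow k hz).add
      ((hasDerivAt_expDivSinPow k hz).const_mul (I * ω / k))).congr_deriv ?_
    field_simp
    linear_combination ω ^ 2 * expDivSinPow ω k z * I_sq
  calc AdmitsMeromorphicAntideriv (expDivSinPow ω (k + 2))
      ↔ AdmitsMeromorphicAntideriv fun z => (k + 1 : ℂ) * expDivSinPow ω (k + 2) z :=
        (const_mul_iff (by exact_mod_cast k.succ_ne_zero)).symm
    _ ↔ AdmitsMeromorphicAntideriv fun z => (k + 1 : ℂ) * expDivSinPow ω (k + 2) z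
          + (((k : ℂ) ^ 2 - ω ^ 2) / k * expDivSinPow ω k z
            - (k + 1) * expDivSinPow ω (k + 2) z) := (add_deriv_iff hGm hG).symm
    _ ↔ AdmitsMeromorphicAntideriv fun z =>
          (k : ℂ)⁻¹ * (((k : ℂ) ^ 2 - ω ^ 2) * expDivSinPow ω k z) := by
        simp only [div_eq_mul_inv, add_sub_cancel, mul_comm, mul_left_comm]
    _ ↔ _ := const_mul_iff (inv_ne_zero hk')

theorem admits_expDivSinPow_add_two {k : ℕ} (hk : k ≠ 0)
    (h : AdmitsMeromorphicAntideriv (expDivSinPow ω k)) :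
    AdmitsMeromorphicAntideriv (expDivSinPow ω (k + 2)) :=
  (admits_expDivSinPow_add_two_iff hk).2 (h.const_mul _)

theorem admits_expDivSinPow_of_add_two {k : ℕ} (hk : k ≠ 0) (hω : ω ^ 2 ≠ k ^ 2)
    (h : AdmitsMeromorphicAntideriv (expDivSinPow ω (k + 2))) :
    AdmitsMeromorphicAntideriv (expDivSinPow ω k) :=
  (const_mul_iff (sub_ne_zero.2 hω.symm)).1 ((admits_expDivSinPow_add_two_iff hk).1 h)

theorem admits_expDivSinPow_add_two_of_sq_eq {k : ℕ} (hk : k ≠ 0) (hω : ω ^ 2 = k ^ 2) :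
    AdmitsMeromorphicAntideriv (expDivSinPow ω (k + 2)) :=
  (admits_expDivSinPow_add_two_iff hk).2 (by simpa only [hω, sub_self, zero_mul] using zero)

theorem admits_expDivSinPow_zero_two : AdmitsMeromorphicAntideriv (expDivSinPow 0 2) :=
  ⟨fun z => -(cos z * expDivSinPow 0 1 z), fun z => by fun_prop,
    fun z hz => by simpa using (hasDerivAt_cos_mul_expDivSinPow (ω := 0) 0 hz).fun_neg⟩

theorem not_admits_expDivSinPow_one (ω : ℂ) :
    ¬ AdmitsMeromorphicAntideriv (expDivSinPow ω 1) := by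
  show ¬ AdmitsMeromorphicAntideriv fun z => exp (I * ω * z) / sin z ^ 1
  simpa only [pow_one] using
    not_admitsMeromorphicAntideriv_div_sin (u := fun z => exp (I * ω * z)) (by fun_prop) (by simp)

theorem not_admits_expDivSinPow_two (hω : ω ≠ 0) :
    ¬ AdmitsMeromorphicAntideriv (expDivSinPow ω 2) := by
  intro h
  have := (add_deriv_iff (G := fun w => cos w * expDivSinPow ω 1 w) (fun z => by fun_prop)
    fun z hz => hasDerivAt_cos_mul_expDivSinPow (ω := ω) 0 hz).2 h
  refine not_admitsMeromorphicAntideriv_div_sin (u := fun z => exp (I * ω * z) * cos z)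
    (by fun_prop) (by simp) ((const_mul_iff (mul_ne_zero I_ne_zero hω)).1 ?_)
  convert this using 2 with z
  simp only [expDivSinPow]
  ring

end expDivSinPow

theorem exists_int_of_admits_expDivSinPow {ω : ℂ} : ∀ n : ℕ, 1 ≤ n →
    AdmitsMeromorphicAntideriv (expDivSinPow ω n) →
      ∃ m : ℤ, ω = m ∧ m % 2 = (n : ℤ) % 2 ∧ |m| ≤ (n : ℤ) - 2
  | 1, _, h => absurd h (not_admits_expDivSinPow_one ω)
  | 2, _, h => ⟨0, by_contra fun hω => not_admits_expDivSinPow_two (by simpa using hω) h,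
      by norm_num⟩
  | k + 3, _, h => by
    by_cases hω : ω ^ 2 = ((k + 1 : ℕ) : ℂ) ^ 2
    · rcases sq_eq_sq_iff_eq_or_eq_neg.1 hω with hω | hω
      · exact ⟨k + 1, by simpa using hω, by omega,
          by rw [abs_of_nonneg (by positivity)]; omega⟩
      · exact ⟨-(k + 1), by simpa using hω, by omega,
          by rw [abs_neg, abs_of_nonneg (by positivity)]; omega⟩
    · obtain ⟨m, rfl, hpar, hle⟩ := exists_int_of_admits_expDivSinPow (k + 1) k.succ_pos
        (admits_expDivSinPow_of_add_two k.succ_ne_zero hω h)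
      exact ⟨m, rfl, by omega, by omega⟩

theorem admits_expDivSinPow_of_int {m : ℤ} : ∀ n : ℕ, m % 2 = (n : ℤ) % 2 →
    |m| ≤ (n : ℤ) - 2 → AdmitsMeromorphicAntideriv (expDivSinPow m n)
  | 0, _, hle | 1, _, hle => absurd (abs_nonneg m) (by omega)
  | k + 2, hpar, hle => by
    rw [abs_le] at hle
    by_cases hm : m = k ∨ m = -k
    · rcases eq_or_ne k 0 with rfl | hk
      · obtain rfl : m = 0 := by omega
        simpa using admits_expDivSinPow_zero_two
      · refine admits_expDivSinPow_add_two_of_sq_eq hk ?_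
        rcases hm with rfl | rfl <;> simp
    · exact admits_expDivSinPow_add_two (by omega)
        (admits_expDivSinPow_of_int k (by omega) (abs_le.2 ⟨by omega, by omega⟩))

/-- Lemma A.4: for `n ≥ 1` and `ω ∈ ℂ`, the function `z ↦ e^{iωz}/sinⁿ z` admits
a meromorphic antiderivative on `ℂ` iff `ω` is an integer of the same parity as
`n` with `|ω| ≤ n − 2`. -/
theorem stmt_6 (n : ℕ) (hn : 1 ≤ n) (ω : ℂ) :
    (∃ F : ℂ → ℂ, (∀ z : ℂ, MeromorphicAt F z) ∧
      ∀ z : ℂ, Complex.sin z ≠ 0 →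
        HasDerivAt F (Complex.exp (Complex.I * ω * z) / Complex.sin z ^ n) z) ↔
    ∃ m : ℤ, ω = (m : ℂ) ∧ m % 2 = (n : ℤ) % 2 ∧ |m| ≤ (n : ℤ) - 2 := by
  change AdmitsMeromorphicAntideriv (expDivSinPow ω n) ↔ _
  refine ⟨exists_int_of_admits_expDivSinPow n hn, ?_⟩
  rintro ⟨m, rfl, hpar, hle⟩
  exact admits_expDivSinPow_of_int n hpar hle
end

section
/- Let e > 0 be real, ω ∈ ℂ, and set λ = 1 − 4ω². For t > 1/e put φ(t) = √(e·t² − 1/e) and E_ω(t) = ((e·t − 1)/(e·t + 1))^{ω} := exp(ω·log((e·t − 1)/(e·t + 1))). Then the function x(t) := φ(t)·E_ω(t) satisfies x''(t) = −λ/(e·t² − 1/e)²·x(t) = −λ·φ(t)^{−4}·x(t) for all t > 1/e; moreover, for ω = 0 the function x(t) := φ(t)·log((e·t − 1)/(e·t + 1)) satisfies x''(t) = −φ(t)^{−4}·x(t) for all t > 1/e. -/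
/-!
If `L' = c / φ²`, then `x = φ · exp (ω L)` satisfies `x'' = (φ'' / φ + (ω c)² / φ⁴) x` and
`x = φ L` satisfies `x'' = (φ'' / φ) x`. For `φ = √(e t² - 1/e)` one has `φ'' = -1 / φ³`, and
`L = log ((e t - 1) / (e t + 1))` has `L' = 2 / φ²`, which gives the two equations with
`λ = 1 - 4 ω²` and `λ = 1`.
-/

open Filter Topology

section

variable {φ φ' L : ℝ → ℝ} {φ'' c t : ℝ}

lemma hasDerivAt_deriv_ofReal_mul_cexp (hφ : ∀ᶠ s in 𝓝 t, HasDerivAt φ (φ' s) s)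
    (hφ' : HasDerivAt φ' φ'' t) (hL : ∀ᶠ s in 𝓝 t, HasDerivAt L (c / φ s ^ 2) s)
    (ht : φ t ≠ 0) (ω : ℂ) :
    HasDerivAt (deriv fun s => (φ s : ℂ) * Complex.exp (ω * L s))
      ((φ'' / φ t + (ω * c) ^ 2 / φ t ^ 4) * (φ t * Complex.exp (ω * L t))) t := by
  have hφt : HasDerivAt φ (φ' t) t := hφ.self_of_nhds
  have htC : (φ t : ℂ) ≠ 0 := by exact_mod_cast ht
  have hE : ∀ s, HasDerivAt L (c / φ s ^ 2) s →
      HasDerivAt (fun s => Complex.exp (ω * L s))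
        (Complex.exp (ω * L s) * (ω * (c / φ s ^ 2 : ℝ))) s :=
    fun s hLs => (hLs.ofReal_comp.const_mul ω).cexp
  have hx' : deriv (fun s => (φ s : ℂ) * Complex.exp (ω * L s)) =ᶠ[𝓝 t]
      fun s => ((φ' s : ℂ) + ω * c / φ s) * Complex.exp (ω * L s) := by
    filter_upwards [hφ, hL, hφt.continuousAt.eventually_ne ht] with s hφs hLs hs
    refine ((hφs.ofReal_comp.fun_mul (hE s hLs)).congr_deriv ?_).deriv
    push_cast
    field_simp
  refine HasDerivAt.congr_of_eventuallyEq ?_ hx'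
  refine ((hφ'.ofReal_comp.fun_add ((hasDerivAt_const t _).fun_div hφt.ofReal_comp
    htC)).fun_mul (hE t hL.self_of_nhds)).congr_deriv ?_
  push_cast
  field_simp
  ring

lemma hasDerivAt_deriv_ofReal_mul_ofReal (hφ : ∀ᶠ s in 𝓝 t, HasDerivAt φ (φ' s) s)
    (hφ' : HasDerivAt φ' φ'' t) (hL : ∀ᶠ s in 𝓝 t, HasDerivAt L (c / φ s ^ 2) s)
    (ht : φ t ≠ 0) :
    HasDerivAt (deriv fun s => (φ s : ℂ) * L s) (φ'' / φ t * (φ t * L t)) t := by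
  have hφt : HasDerivAt φ (φ' t) t := hφ.self_of_nhds
  have htC : (φ t : ℂ) ≠ 0 := by exact_mod_cast ht
  have hx' : deriv (fun s => (φ s : ℂ) * L s) =ᶠ[𝓝 t]
      fun s => (φ' s : ℂ) * L s + c / φ s := by
    filter_upwards [hφ, hL, hφt.continuousAt.eventually_ne ht] with s hφs hLs hs
    refine ((hφs.ofReal_comp.fun_mul hLs.ofReal_comp).congr_deriv ?_).deriv
    push_cast
    field_simp
  refine HasDerivAt.congr_of_eventuallyEq ?_ hx'
  refine ((hφ'.ofReal_comp.fun_mul hL.self_of_nhds.ofReal_comp).fun_add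
    ((hasDerivAt_const t _).fun_div hφt.ofReal_comp htC)).congr_deriv ?_
  push_cast
  field_simp
  ring

end

section

variable {a b t : ℝ}

lemma hasDerivAt_sqrt_mul_sq_sub (h : 0 < a * t ^ 2 - b) :
    HasDerivAt (fun s => √(a * s ^ 2 - b)) (a * t / √(a * t ^ 2 - b)) t := by
  have hP : HasDerivAt (fun s => a * s ^ 2 - b) (a * (2 * t)) t := by
    simpa using ((hasDerivAt_pow 2 t).const_mul a).sub_const b
  refine (hP.sqrt h.ne').congr_deriv ?_
  have : √(a * t ^ 2 - b) ≠ 0 := (Real.sqrt_pos.mpr h).ne'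
  field_simp

lemma hasDerivAt_mul_div_sqrt_mul_sq_sub (h : 0 < a * t ^ 2 - b) :
    HasDerivAt (fun s => a * s / √(a * s ^ 2 - b)) (-(a * b) / √(a * t ^ 2 - b) ^ 3) t := by
  have hS : 0 < √(a * t ^ 2 - b) := Real.sqrt_pos.mpr h
  refine ((hasDerivAt_const_mul a).fun_div (hasDerivAt_sqrt_mul_sq_sub h)
    hS.ne').congr_deriv ?_
  have hsq : √(a * t ^ 2 - b) ^ 2 = a * t ^ 2 - b := Real.sq_sqrt h.le
  field_simp
  linear_combination a * hsq

lemma hasDerivAt_log_div (ha : a ≠ 0) (h₁ : a * t - 1 ≠ 0) (h₂ : a * t + 1 ≠ 0) :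
    HasDerivAt (fun s => Real.log ((a * s - 1) / (a * s + 1))) (2 / (a * t ^ 2 - 1 / a)) t := by
  refine ((((hasDerivAt_const_mul a).sub_const 1).fun_div
    ((hasDerivAt_const_mul a).add_const 1) h₂).log (div_ne_zero h₁ h₂)).congr_deriv ?_
  rw [show a * t ^ 2 - 1 / a = (a * t - 1) * (a * t + 1) / a by field_simp; ring]
  field_simp
  ring

lemma mul_sq_sub_one_div_pos (ha : 0 < a) (ht : 1 < a * t) : 0 < a * t ^ 2 - 1 / a := by
  rw [show a * t ^ 2 - 1 / a = (a * t - 1) * (a * t + 1) / a by field_simp; ring]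
  exact div_pos (mul_pos (by linarith) (by linarith)) ha

end

/-- Proposition 5.1 (nonzero energy `e > 0`): with `φ(t) = √(e t² − 1/e)` and
`E_ω(t) = ((et−1)/(et+1))^ω`, the function `x = φ·E_ω` solves
`x'' = −(1−4ω²)·φ⁻⁴·x` on `(1/e, ∞)`; and for `ω = 0`, `x = φ·log((et−1)/(et+1))`
solves `x'' = −φ⁻⁴·x` there. -/
theorem stmt_12 (e : ℝ) (he : 0 < e) (ω : ℂ) :
    (∀ t : ℝ, 1 / e < t →
      HasDerivAt (deriv (fun s : ℝ =>
          (Real.sqrt (e * s ^ 2 - 1 / e) : ℂ) *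
            Complex.exp (ω * (Real.log ((e * s - 1) / (e * s + 1)) : ℂ))))
        (-(1 - 4 * ω ^ 2) / ((e * t ^ 2 - 1 / e : ℝ) : ℂ) ^ 2 *
          ((Real.sqrt (e * t ^ 2 - 1 / e) : ℂ) *
            Complex.exp (ω * (Real.log ((e * t - 1) / (e * t + 1)) : ℂ)))) t) ∧
    (∀ t : ℝ, 1 / e < t →
      HasDerivAt (deriv (fun s : ℝ =>
          (Real.sqrt (e * s ^ 2 - 1 / e) : ℂ) *
            (Real.log ((e * s - 1) / (e * s + 1)) : ℂ)))
        (-1 / ((e * t ^ 2 - 1 / e : ℝ) : ℂ) ^ 2 *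
          ((Real.sqrt (e * t ^ 2 - 1 / e) : ℂ) *
            (Real.log ((e * t - 1) / (e * t + 1)) : ℂ))) t) := by
  have het {t : ℝ} (ht : 1 / e < t) : 1 < e * t := by rw [div_lt_iff₀ he] at ht; linarith
  have hP {t : ℝ} (ht : 1 / e < t) := mul_sq_sub_one_div_pos he (het ht)
  have hφ {t : ℝ} (ht : 1 / e < t) := hasDerivAt_sqrt_mul_sq_sub (hP ht)
  have hφ' {t : ℝ} (ht : 1 / e < t) := hasDerivAt_mul_div_sqrt_mul_sq_sub (hP ht)
  have hL {t : ℝ} (ht : 1 / e < t) : HasDerivAt (fun s => Real.log ((e * s - 1) / (e * s + 1)))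
      (2 / √(e * t ^ 2 - 1 / e) ^ 2) t := by
    rw [Real.sq_sqrt (hP ht).le]
    exact hasDerivAt_log_div he.ne' (by linarith [het ht]) (by linarith [het ht])
  have hφ0 {t : ℝ} (ht : 1 / e < t) : √(e * t ^ 2 - 1 / e) ≠ 0 := (Real.sqrt_pos.mpr (hP ht)).ne'
  have hsq {t : ℝ} (ht : 1 / e < t) :
      ((e * t ^ 2 - 1 / e : ℝ) : ℂ) = (√(e * t ^ 2 - 1 / e) : ℂ) ^ 2 := by
    rw [← Complex.ofReal_pow, Real.sq_sqrt (hP ht).le]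
  refine ⟨fun t ht => ?_, fun t ht => ?_⟩
  · refine (hasDerivAt_deriv_ofReal_mul_cexp ((eventually_gt_nhds ht).mono fun _ => hφ) (hφ' ht)
      ((eventually_gt_nhds ht).mono fun _ => hL) (hφ0 ht) ω).congr_deriv ?_
    have hφt : (√(e * t ^ 2 - 1 / e) : ℂ) ≠ 0 := by exact_mod_cast hφ0 ht
    rw [hsq ht, mul_one_div_cancel he.ne']
    push_cast
    generalize (√(e * t ^ 2 - 1 / e) : ℂ) = φ at hφt ⊢
    field_simp
    ring
  · refine (hasDerivAt_deriv_ofReal_mul_ofReal ((eventually_gt_nhds ht).mono fun _ => hφ)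
      (hφ' ht) ((eventually_gt_nhds ht).mono fun _ => hL) (hφ0 ht)).congr_deriv ?_
    have hφt : (√(e * t ^ 2 - 1 / e) : ℂ) ≠ 0 := by exact_mod_cast hφ0 ht
    rw [hsq ht, mul_one_div_cancel he.ne']
    push_cast
    generalize (√(e * t ^ 2 - 1 / e) : ℂ) = φ at hφt ⊢
    field_simp
end

section
/- Let J ⊆ ℝ be an open interval and let u : J → ℂ, I : J → ℂ and, for each ω ∈ ℂ, E_ω : J → ℂ be differentiable functions satisfying: E_ω'(t) = 2ω·u(t)·E_ω(t) and I'(t) = 2·u(t) for all t ∈ J, together with E_ω·E_{ω'} = E_{ω+ω'} (pointwise product) and E₀ = 1. Let B be the ℂ-linear span of the family of functions {I^m·E_ω : m ∈ ℕ, ω ∈ ℂ} inside the functions J → ℂ. Then for every b ∈ B there exists Φ ∈ B with Φ'(t) = u(t)·b(t) for all t ∈ J. (This is Lemma 5.1: every ∫ b/φ² with b ∈ B again lies in B, where u = 1/φ².) -/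
/-!
Differentiating `I^(m+1) E_ω` gives `u·(2(m+1) I^m E_ω + 2ω I^(m+1) E_ω)`. For `ω = 0` this
exhibits `u·I^m E_0` as a derivative directly; for `ω ≠ 0` it expresses `u·I^(m+1) E_ω` as a
derivative minus a multiple of `u·I^m E_ω`, so induction on `m`, starting from
`(E_ω)' = 2ω u E_ω`, handles every generator. Linearity extends this to the span.
-/

def antiderivMulSubmodule (u : ℝ → ℂ) (J : Set ℝ) (M : Submodule ℂ (ℝ → ℂ)) :
    Submodule ℂ (ℝ → ℂ) where
  carrier := {b | ∃ Φ ∈ M, ∀ t ∈ J, HasDerivAt Φ (u t * b t) t}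
  zero_mem' := ⟨0, M.zero_mem, fun t _ => by simp⟩
  add_mem' := by
    rintro f g ⟨Φ, hΦM, hΦ⟩ ⟨Ψ, hΨM, hΨ⟩
    refine ⟨Φ + Ψ, M.add_mem hΦM hΨM, fun t ht => ?_⟩
    simpa only [Pi.add_apply, mul_add] using (hΦ t ht).add (hΨ t ht)
  smul_mem' := by
    rintro c f ⟨Φ, hΦM, hΦ⟩
    refine ⟨c • Φ, M.smul_mem c hΦM, fun t ht => ?_⟩
    simpa only [Pi.smul_apply, smul_eq_mul, mul_left_comm c] using (hΦ t ht).const_smul c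

theorem mem_antiderivMulSubmodule_of_hasDerivAt {u : ℝ → ℂ} {J : Set ℝ}
    {M : Submodule ℂ (ℝ → ℂ)} {Φ f g : ℝ → ℂ} {c : ℂ} (hc : c ≠ 0) (hΦM : Φ ∈ M)
    (hg : g ∈ antiderivMulSubmodule u J M)
    (hΦ : ∀ t ∈ J, HasDerivAt Φ (u t * (c * f t + g t)) t) :
    f ∈ antiderivMulSubmodule u J M := by
  obtain ⟨Ψ, hΨM, hΨ⟩ := hg
  refine ⟨c⁻¹ • (Φ - Ψ), M.smul_mem _ (M.sub_mem hΦM hΨM), fun t ht => ?_⟩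
  refine (((hΦ t ht).sub (hΨ t ht)).const_smul c⁻¹).congr_deriv ?_
  simp only [smul_eq_mul]
  field_simp
  ring

theorem hasDerivAt_pow_succ_mul {u I e : ℝ → ℂ} {ω : ℂ} {t : ℝ} (m : ℕ)
    (hI : HasDerivAt I (2 * u t) t) (he : HasDerivAt e (2 * ω * u t * e t) t) :
    HasDerivAt (fun t => I t ^ (m + 1) * e t)
      (u t * (2 * (m + 1) * (I t ^ m * e t) + 2 * ω * (I t ^ (m + 1) * e t))) t := by
  refine ((hI.fun_pow (m + 1)).mul he).congr_deriv ?_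
  push_cast
  ring

theorem pow_mul_mem_antiderivMulSubmodule {J : Set ℝ} {u I : ℝ → ℂ} {E : ℂ → ℝ → ℂ}
    {M : Submodule ℂ (ℝ → ℂ)}
    (hE : ∀ (ω : ℂ) (t : ℝ), t ∈ J → HasDerivAt (E ω) (2 * ω * u t * E ω t) t)
    (hI : ∀ t ∈ J, HasDerivAt I (2 * u t) t)
    (hM : ∀ (m : ℕ) (ω : ℂ), (fun t => I t ^ m * E ω t) ∈ M) (m : ℕ) (ω : ℂ) :
    (fun t => I t ^ m * E ω t) ∈ antiderivMulSubmodule u J M := by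
  have hderiv (m : ℕ) (ω : ℂ) := fun t ht => hasDerivAt_pow_succ_mul m (hI t ht) (hE ω t ht)
  rcases eq_or_ne ω 0 with rfl | hω
  · refine mem_antiderivMulSubmodule_of_hasDerivAt (by norm_cast) (hM (m + 1) 0) ?_ (hderiv m 0)
    convert (antiderivMulSubmodule u J M).zero_mem using 1
    ext
    simp
  induction m with
  | zero =>
    refine mem_antiderivMulSubmodule_of_hasDerivAt (mul_ne_zero two_ne_zero hω) (hM 0 ω)
      (Submodule.zero_mem _) fun t ht => ?_
    simpa [mul_comm, mul_left_comm] using hE ω t ht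
  | succ m ih =>
    refine mem_antiderivMulSubmodule_of_hasDerivAt (mul_ne_zero two_ne_zero hω)
      (hM (m + 1) ω) ((antiderivMulSubmodule u J M).smul_mem (2 * (m + 1)) ih) fun t ht => ?_
    simpa only [add_comm, Pi.smul_apply, smul_eq_mul] using hderiv m ω t ht

theorem stmt_14_general (J : Set ℝ)
    (u I : ℝ → ℂ) (E : ℂ → ℝ → ℂ)
    (hE : ∀ (ω : ℂ) (t : ℝ), t ∈ J → HasDerivAt (E ω) (2 * ω * u t * E ω t) t)
    (hI : ∀ t ∈ J, HasDerivAt I (2 * u t) t) :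
    ∀ b ∈ Submodule.span ℂ
        {f : ℝ → ℂ | ∃ (m : ℕ) (ω : ℂ), f = fun t => I t ^ m * E ω t},
      ∃ Φ ∈ Submodule.span ℂ
          {f : ℝ → ℂ | ∃ (m : ℕ) (ω : ℂ), f = fun t => I t ^ m * E ω t},
        ∀ t ∈ J, HasDerivAt Φ (u t * b t) t := by
  set B := Submodule.span ℂ {f : ℝ → ℂ | ∃ (m : ℕ) (ω : ℂ), f = fun t => I t ^ m * E ω t}
  suffices hB : B ≤ antiderivMulSubmodule u J B from fun b hb => hB hb
  refine Submodule.span_le.2 ?_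
  rintro f ⟨m, ω, rfl⟩
  refine pow_mul_mem_antiderivMulSubmodule hE hI ?_ m ω
  exact fun m ω => Submodule.subset_span ⟨m, ω, rfl⟩

/-- Lemma 5.1 (abstract form): with `E_ω' = 2ω u E_ω`, `I' = 2u`,
`E_ω E_{ω'} = E_{ω+ω'}`, `E₀ = 1` on an open interval `J`, the `ℂ`-span `B` of
the functions `I^m E_ω` is closed under `b ↦ ∫ u·b`: for every `b ∈ B` there is
`Φ ∈ B` with `Φ' = u·b` on `J`. -/
theorem stmt_14 (J : Set ℝ) (hJo : IsOpen J) (hJc : J.OrdConnected)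
    (u I : ℝ → ℂ) (E : ℂ → ℝ → ℂ)
    (hE : ∀ (ω : ℂ) (t : ℝ), t ∈ J → HasDerivAt (E ω) (2 * ω * u t * E ω t) t)
    (hI : ∀ t ∈ J, HasDerivAt I (2 * u t) t)
    (hmul : ∀ (ω ω' : ℂ) (t : ℝ), t ∈ J → E ω t * E ω' t = E (ω + ω') t)
    (hE0 : ∀ t ∈ J, E 0 t = 1) :
    ∀ b ∈ Submodule.span ℂ
        {f : ℝ → ℂ | ∃ (m : ℕ) (ω : ℂ), f = fun t => I t ^ m * E ω t},
      ∃ Φ ∈ Submodule.span ℂ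
          {f : ℝ → ℂ | ∃ (m : ℕ) (ω : ℂ), f = fun t => I t ^ m * E ω t},
        ∀ t ∈ J, HasDerivAt Φ (u t * b t) t :=
  stmt_14_general J u I E hE hI
end

section
/- Let B denote the ℂ-linear span, inside the space of functions (0,∞) → ℂ, of the functions t ↦ (log t)^m · t^ω for m ∈ ℕ and ω ∈ ℂ, where t^ω := exp(ω · log t). Let λ ∈ ℂ and b ∈ B. Then every twice differentiable function x : (0,∞) → ℂ satisfying x''(t) = −λ/(4t²)·x(t) + b(t)/(2t)^{3/2} for all t > 0 can be written as x(t) = √(2t)·g(t) for some g ∈ B. (This is Lemma 5.2 for the zero-energy phase curve, where φ(t) = √(2t), so φ⁴ = 4t² and φ³ = (2t)^{3/2}.) -/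
/-!
With `θ = t d/dt` we have `t² d²/dt² = θ² - θ`, so multiplying the equation by `t²` turns it into
the Euler equation `(θ - r₁)(θ - r₂) x = F`, where `r₁ + r₂ = 1`, `r₁ r₂ = λ/4` and
`F = t² b / (2t)^{3/2} = b(t) t^{1/2} / (2√2)` lies in `B`. A first-order equation `θ w - r w = F`
is solved by variation of constants, `w = t^r (∫ F t^{-r-1} dt + C)`, and `B` is stable under
multiplication by `t^r` and under `h ↦ ∫ h(t)/t dt` (integrate `(log t)^m t^ω / t` by parts in
`m`), so two such steps give `x ∈ B`, and then `x / √(2t) ∈ B` as well.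
-/

/-- The space `B`: the `ℂ`-linear span of the functions `t ↦ (log t)^m · t^ω`
(`m ∈ ℕ`, `ω ∈ ℂ`, `t^ω := exp(ω log t)`) on `(0,∞)`. -/
noncomputable def logExpSpan : Submodule ℂ (ℝ → ℂ) :=
  Submodule.span ℂ
    {f : ℝ → ℂ | ∃ (m : ℕ) (ω : ℂ),
      f = fun t => ((Real.log t : ℂ)) ^ m * Complex.exp (ω * (Real.log t : ℂ))}

open Complex

noncomputable def logMonomial (m : ℕ) (ω : ℂ) (t : ℝ) : ℂ :=
  (Real.log t : ℂ) ^ m * exp (ω * Real.log t)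

theorem logMonomial_mem_logExpSpan (m : ℕ) (ω : ℂ) : logMonomial m ω ∈ logExpSpan :=
  Submodule.subset_span ⟨m, ω, rfl⟩

theorem hasDerivAt_ofReal_log {t : ℝ} (ht : 0 < t) :
    HasDerivAt (fun s : ℝ => (Real.log s : ℂ)) (t : ℂ)⁻¹ t := by
  simpa using (Real.hasDerivAt_log ht.ne').ofReal_comp

theorem hasDerivAt_logMonomial (m : ℕ) (ω : ℂ) {t : ℝ} (ht : 0 < t) :
    HasDerivAt (logMonomial m ω)
      ((m * logMonomial (m - 1) ω t + ω * logMonomial m ω t) / t) t := by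
  have hlog := hasDerivAt_ofReal_log ht
  refine ((hlog.pow m).mul (hlog.const_mul ω).cexp).congr_deriv ?_
  simp only [logMonomial, Pi.pow_apply]
  field_simp

theorem mul_cexp_mul_log_mem_logExpSpan {f : ℝ → ℂ} (hf : f ∈ logExpSpan) (r : ℂ) :
    (fun t => f t * exp (r * Real.log t)) ∈ logExpSpan := by
  induction hf using Submodule.span_induction with
  | mem g hg =>
    obtain ⟨m, ω, rfl⟩ := hg
    convert logMonomial_mem_logExpSpan m (ω + r) using 1
    ext t
    simp only [logMonomial, add_mul, exp_add, mul_assoc]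
  | zero => convert logExpSpan.zero_mem using 1; ext; simp
  | add g h _ _ hg hh => convert logExpSpan.add_mem hg hh using 1; ext; simp [add_mul]
  | smul c g _ hg => convert logExpSpan.smul_mem c hg using 1; ext; simp [mul_assoc]

theorem exists_hasDerivAt_logMonomial_div (m : ℕ) (ω : ℂ) :
    ∃ H ∈ logExpSpan, ∀ t : ℝ, 0 < t → HasDerivAt H (logMonomial m ω t / t) t := by
  rcases eq_or_ne ω 0 with rfl | hω
  · refine ⟨((m : ℂ) + 1)⁻¹ • logMonomial (m + 1) 0,
      logExpSpan.smul_mem _ (logMonomial_mem_logExpSpan _ _), fun t ht => ?_⟩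
    refine ((hasDerivAt_logMonomial (m + 1) 0 ht).const_smul ((m : ℂ) + 1)⁻¹).congr_deriv ?_
    have : (m : ℂ) + 1 ≠ 0 := Nat.cast_add_one_ne_zero m
    simp only [Nat.add_sub_cancel, Nat.cast_add, Nat.cast_one, smul_eq_mul]
    field_simp
    ring
  induction m with
  | zero =>
    refine ⟨ω⁻¹ • logMonomial 0 ω,
      logExpSpan.smul_mem _ (logMonomial_mem_logExpSpan _ _), fun t ht => ?_⟩
    refine ((hasDerivAt_logMonomial 0 ω ht).const_smul ω⁻¹).congr_deriv ?_
    simp only [Nat.cast_zero, zero_mul, zero_add, smul_eq_mul]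
    field_simp
  | succ m ih =>
    obtain ⟨H, hH, hH'⟩ := ih
    refine ⟨ω⁻¹ • logMonomial (m + 1) ω - ((m + 1 : ℂ) / ω) • H,
      logExpSpan.sub_mem (logExpSpan.smul_mem _ (logMonomial_mem_logExpSpan _ _))
        (logExpSpan.smul_mem _ hH), fun t ht => ?_⟩
    refine (((hasDerivAt_logMonomial (m + 1) ω ht).const_smul ω⁻¹).sub
      ((hH' t ht).const_smul ((m + 1 : ℂ) / ω))).congr_deriv ?_
    simp only [Nat.add_sub_cancel, Nat.cast_add, Nat.cast_one, smul_eq_mul]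
    field_simp
    ring

theorem exists_hasDerivAt_div_of_mem_logExpSpan {h : ℝ → ℂ} (hh : h ∈ logExpSpan) :
    ∃ H ∈ logExpSpan, ∀ t : ℝ, 0 < t → HasDerivAt H (h t / t) t := by
  induction hh using Submodule.span_induction with
  | mem f hf =>
    obtain ⟨m, ω, rfl⟩ := hf
    exact exists_hasDerivAt_logMonomial_div m ω
  | zero => exact ⟨0, logExpSpan.zero_mem, fun t _ => by simp⟩
  | add f g _ _ hf hg =>
    obtain ⟨F, hF, hF'⟩ := hf
    obtain ⟨G, hG, hG'⟩ := hg
    exact ⟨F + G, logExpSpan.add_mem hF hG, fun t ht => by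
      simpa [add_div] using (hF' t ht).add (hG' t ht)⟩
  | smul c f _ hf =>
    obtain ⟨F, hF, hF'⟩ := hf
    exact ⟨c • F, logExpSpan.smul_mem c hF, fun t ht => by
      simpa [mul_div_assoc] using (hF' t ht).const_smul c⟩

theorem const_mem_logExpSpan (c : ℂ) : (fun _ => c) ∈ logExpSpan := by
  convert logExpSpan.smul_mem c (logMonomial_mem_logExpSpan 0 0) using 1
  ext
  simp [logMonomial]

theorem exists_mem_logExpSpan_of_mul_deriv_sub (r : ℂ) {F w w' : ℝ → ℂ} (hF : F ∈ logExpSpan)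
    (hw : ∀ t : ℝ, 0 < t → HasDerivAt w (w' t) t)
    (heq : ∀ t : ℝ, 0 < t → t * w' t - r * w t = F t) :
    ∃ g ∈ logExpSpan, ∀ t : ℝ, 0 < t → w t = g t := by
  set E : ℝ → ℂ := fun t => exp (-r * Real.log t)
  obtain ⟨H, hH, hH'⟩ :=
    exists_hasDerivAt_div_of_mem_logExpSpan (mul_cexp_mul_log_mem_logExpSpan hF (-r))
  have hW' : ∀ t : ℝ, 0 < t → HasDerivAt (fun s => w s * E s - H s) 0 t := by
    intro t ht
    have hE : HasDerivAt E (E t * (-r * (t : ℂ)⁻¹)) t :=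
      ((hasDerivAt_ofReal_log ht).const_mul (-r)).cexp
    refine (((hw t ht).mul hE).sub (hH' t ht)).congr_deriv ?_
    have : (t : ℂ) ≠ 0 := by exact_mod_cast ht.ne'
    field_simp
    simp only [E, neg_mul]
    linear_combination exp (-(r * Real.log t)) * heq t ht
  obtain ⟨C, hC⟩ := isOpen_Ioi.exists_is_const_of_deriv_eq_zero isPreconnected_Ioi
    (fun t ht => (hW' t ht).differentiableAt.differentiableWithinAt)
    (fun t ht => (hW' t ht).deriv)
  refine ⟨fun t => (H t + C) * exp (r * Real.log t),
    mul_cexp_mul_log_mem_logExpSpan (logExpSpan.add_mem hH (const_mem_logExpSpan C)) r,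
    fun t ht => ?_⟩
  have hEr : E t * exp (r * Real.log t) = 1 := by
    rw [← exp_add]; simp
  linear_combination exp (r * Real.log t) * hC t ht - w t * hEr

theorem exists_mem_logExpSpan_of_euler (a c : ℂ) {F x : ℝ → ℂ} (hF : F ∈ logExpSpan)
    (hx1 : ∀ t : ℝ, 0 < t → DifferentiableAt ℝ x t)
    (hx2 : ∀ t : ℝ, 0 < t → DifferentiableAt ℝ (deriv x) t)
    (heq : ∀ t : ℝ, 0 < t → t ^ 2 * deriv (deriv x) t + a * t * deriv x t + c * x t = F t) :
    ∃ g ∈ logExpSpan, ∀ t : ℝ, 0 < t → x t = g t := by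
  -- `r₁, r₂` are the roots of the indicial polynomial `r² + (a - 1) r + c`.
  obtain ⟨s, hs⟩ := IsAlgClosed.exists_eq_mul_self ((1 - a) ^ 2 - 4 * c)
  set r₁ := (1 - a + s) / 2
  set r₂ := (1 - a - s) / 2
  have hu : ∀ t : ℝ, 0 < t → HasDerivAt (fun t : ℝ => t * deriv x t - r₁ * x t)
      (deriv x t + t * deriv (deriv x) t - r₁ * deriv x t) t := by
    intro t ht
    refine ((HasDerivAt.ofReal_comp (hasDerivAt_id t)).mul (hx2 t ht).hasDerivAt |>.sub
      ((hx1 t ht).hasDerivAt.const_mul r₁)).congr_deriv ?_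
    simp
  obtain ⟨g₁, hg₁, hu_eq⟩ := exists_mem_logExpSpan_of_mul_deriv_sub r₂ hF hu
    (fun t ht => by linear_combination heq t ht + x t / 4 * hs)
  exact exists_mem_logExpSpan_of_mul_deriv_sub r₁ hg₁ (fun t ht => (hx1 t ht).hasDerivAt) hu_eq

theorem ofReal_sqrt_eq_cexp {t : ℝ} (ht : 0 < t) : (√t : ℂ) = exp (1 / 2 * Real.log t) := by
  rw [Real.sqrt_eq_rpow, Real.rpow_def_of_pos ht, ofReal_exp]
  push_cast
  ring_nf

theorem cexp_half_log_sq {t : ℝ} (ht : 0 < t) : exp (1 / 2 * Real.log t) ^ 2 = t := by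
  rw [← ofReal_sqrt_eq_cexp ht]
  norm_cast
  exact Real.sq_sqrt ht.le

theorem ofReal_sqrt_two_mul {t : ℝ} (ht : 0 < t) :
    (√(2 * t) : ℂ) = √2 * exp (1 / 2 * Real.log t) := by
  rw [Real.sqrt_mul zero_le_two, ofReal_mul, ofReal_sqrt_eq_cexp ht]

/-- Lemma 5.2 at zero energy (`φ(t) = √(2t)`): if `b ∈ B` and `x` is twice
differentiable on `(0,∞)` with `x'' = −λ/(4t²)·x + b/(2t)^{3/2}`, then
`x = √(2t)·g` for some `g ∈ B`. -/
theorem stmt_15 (lam : ℂ) (b : ℝ → ℂ) (hb : b ∈ logExpSpan)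
    (x : ℝ → ℂ)
    (hx1 : ∀ t : ℝ, 0 < t → DifferentiableAt ℝ x t)
    (hx2 : ∀ t : ℝ, 0 < t → DifferentiableAt ℝ (deriv x) t)
    (hx : ∀ t : ℝ, 0 < t →
      deriv (deriv x) t =
        -lam / (4 * (t : ℂ) ^ 2) * x t + b t / ((Real.sqrt (2 * t) : ℂ)) ^ 3) :
    ∃ g ∈ logExpSpan, ∀ t : ℝ, 0 < t → x t = (Real.sqrt (2 * t) : ℂ) * g t := by
  have hsqrt2 : (√2 : ℂ) ^ 2 = 2 := by norm_cast; simp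
  have hsqrt2_ne : (√2 : ℂ) ≠ 0 := by norm_cast; positivity
  obtain ⟨X, hX, hxX⟩ := exists_mem_logExpSpan_of_euler 0 (lam / 4)
    (logExpSpan.smul_mem (2 * √2 : ℂ)⁻¹ (mul_cexp_mul_log_mem_logExpSpan hb (1 / 2)))
    hx1 hx2 (fun t ht => by
      have := exp_ne_zero (1 / 2 * Real.log t)
      rw [hx t ht, ofReal_sqrt_two_mul ht, ← cexp_half_log_sq ht]
      simp only [Pi.smul_apply, smul_eq_mul]
      field_simp
      linear_combination (-(4 * exp (Real.log t / 2) * b t)) * hsqrt2)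
  refine ⟨fun t => (√2 : ℂ)⁻¹ * (X t * exp (-(1 / 2) * Real.log t)),
    logExpSpan.smul_mem _ (mul_cexp_mul_log_mem_logExpSpan hX _), fun t ht => ?_⟩
  have hinv : exp (1 / 2 * Real.log t) * exp (-(1 / 2) * Real.log t) = 1 := by
    rw [← exp_add]; ring_nf; exact exp_zero
  rw [hxX t ht, ofReal_sqrt_two_mul ht]
  linear_combination (-(X t * exp (1 / 2 * Real.log t) * exp (-(1 / 2) * Real.log t))) *
    mul_inv_cancel₀ hsqrt2_ne - X t * hinv
end
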